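/- For every positive integer k there exist infinitely many polynomial Cunningham chains of the second kind of length exactly k: i.e., infinitely many f_1 ∈ ℤ[x] with positive leading coefficient such that, setting f_n(x) = x·f_{n−1}(x) − 1, the polynomials f_1, ..., f_k are irreducible over ℚ and f_{k+1} is reducible over ℚ. -/

import Mathlib

/-!
Take `f₁ = p X + (k - p)` with `p ≥ k` prime. Then `f_{n+1} = X^n f₁ - (1 + X + ⋯ + X^{n-1})`,
so `f_{k+1}(1) = 0` and `f_{k+1}` is reducible. For `2 ≤ n ≤ k` a root `z` of `f_n` with
`|z| ≥ 1` would give `p |z|^n ≤ (p - k + n - 1) |z|^(n-1)`, so all roots lie in the open unit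
disc. A factorisation `f_n = g h` over `ℤ` has, say, `g` with leading coefficient `±1` since `p`
is prime; but `g(0) = ±1` as well because `f_n(0) = -1`, so the roots of `g` have product of
modulus `1`, forcing `g` to be constant.
-/

open Polynomial

theorem Multiset.norm_prod_lt_one {R : Type*} [SeminormedCommRing R] {s : Multiset R}
    (hs : s ≠ 0) (h : ∀ z ∈ s, ‖z‖ < 1) : ‖s.prod‖ < 1 := by
  induction s using Multiset.induction_on with
  | empty => exact absurd rfl hs
  | cons a t ih =>
    have ha : ‖a‖ < 1 := h a (Multiset.mem_cons_self a t)
    rw [Multiset.prod_cons]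
    rcases eq_or_ne t 0 with rfl | ht
    · simpa using ha
    · have ht1 := ih ht fun z hz => h z (Multiset.mem_cons_of_mem hz)
      calc ‖a * t.prod‖ ≤ ‖a‖ * ‖t.prod‖ := norm_mul_le _ _
        _ < 1 := mul_lt_one_of_nonneg_of_lt_one_left (norm_nonneg a) ha ht1.le

namespace Polynomial

theorem norm_coeff_zero_lt_norm_leadingCoeff {K : Type*} [NormedField K] [IsAlgClosed K]
    {g : K[X]} (hg : 0 < g.natDegree) (hroots : ∀ z, g.IsRoot z → ‖z‖ < 1) :
    ‖g.coeff 0‖ < ‖g.leadingCoeff‖ := by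
  have hsplit := IsAlgClosed.splits g
  have hprod : ‖g.roots.prod‖ < 1 := by
    refine Multiset.norm_prod_lt_one ?_ fun z hz => hroots z (isRoot_of_mem_roots hz)
    rwa [← Multiset.card_pos, ← hsplit.natDegree_eq_card_roots]
  rw [hsplit.coeff_zero_eq_leadingCoeff_mul_prod_roots, norm_mul, norm_mul, norm_pow, norm_neg,
    norm_one, one_pow, one_mul]
  exact mul_lt_of_lt_one_right (norm_pos_iff.2 (leadingCoeff_ne_zero.2
    (ne_zero_of_natDegree_gt hg))) hprod

theorem isUnit_of_dvd_of_isUnit_leadingCoeff {f g : ℤ[X]} (hcoeff : IsUnit (f.coeff 0))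
    (hroots : ∀ z : ℂ, aeval z f = 0 → ‖z‖ < 1) (hgf : g ∣ f) (hg : IsUnit g.leadingCoeff) :
    IsUnit g := by
  obtain ⟨h, rfl⟩ := hgf
  have hg0 : IsUnit (g.coeff 0) := isUnit_of_mul_isUnit_left (by rwa [mul_coeff_zero] at hcoeff)
  rcases Nat.eq_zero_or_pos g.natDegree with hdeg | hdeg
  · rw [eq_C_of_natDegree_eq_zero hdeg]
    exact isUnit_C.2 hg0
  have hinj := RingHom.injective_int (algebraMap ℤ ℂ)
  have hlt := norm_coeff_zero_lt_norm_leadingCoeff (g := g.map (algebraMap ℤ ℂ))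
    (by rwa [natDegree_map_eq_of_injective hinj]) fun z hz => hroots z <| by
      rw [map_mul, ← eval_map_algebraMap, hz.eq_zero, zero_mul]
  rw [coeff_map, leadingCoeff_map_of_injective hinj, eq_intCast, eq_intCast, Complex.norm_intCast,
    Complex.norm_intCast, ← Int.cast_abs, ← Int.cast_abs, Int.isUnit_iff_abs_eq.1 hg0,
    Int.isUnit_iff_abs_eq.1 hg] at hlt
  exact absurd hlt (lt_irrefl _)

theorem irreducible_of_prime_leadingCoeff_of_norm_root_lt_one {f : ℤ[X]}
    (hlead : Prime f.leadingCoeff) (hcoeff : IsUnit (f.coeff 0))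
    (hroots : ∀ z : ℂ, aeval z f = 0 → ‖z‖ < 1) : Irreducible f where
  not_isUnit hf := hlead.not_isUnit (hf.map leadingCoeffHom)
  isUnit_or_isUnit g h hgh := by
    have hlead_mul : f.leadingCoeff = g.leadingCoeff * h.leadingCoeff := by
      rw [hgh, leadingCoeff_mul]
    exact (hlead.irreducible.isUnit_or_isUnit hlead_mul).imp
      (isUnit_of_dvd_of_isUnit_leadingCoeff hcoeff hroots (Dvd.intro _ hgh.symm))
      (isUnit_of_dvd_of_isUnit_leadingCoeff hcoeff hroots (Dvd.intro_left _ hgh.symm))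

end Polynomial

theorem norm_lt_one_of_mul_pow_add_mul_pow_eq_geom_sum {a b : ℝ} {n : ℕ} (hab : |b| + n < a)
    {z : ℂ} (hz : a * z ^ (n + 1) + b * z ^ n = ∑ j ∈ Finset.range n, z ^ j) : ‖z‖ < 1 := by
  by_contra! hz1
  have hrn : 0 < ‖z‖ ^ n := pow_pos (one_pos.trans_le hz1) n
  have hsum : ‖∑ j ∈ Finset.range n, z ^ j‖ ≤ n * ‖z‖ ^ n := by
    calc ‖∑ j ∈ Finset.range n, z ^ j‖ ≤ ∑ j ∈ Finset.range n, ‖z‖ ^ j := by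
          simpa only [norm_pow] using norm_sum_le (Finset.range n) fun j => z ^ j
      _ ≤ ∑ _j ∈ Finset.range n, ‖z‖ ^ n := Finset.sum_le_sum fun j hj =>
          pow_le_pow_right₀ hz1 (Finset.mem_range.1 hj).le
      _ = n * ‖z‖ ^ n := by simp
  have ha : 0 ≤ a := (add_nonneg (abs_nonneg b) n.cast_nonneg).trans hab.le
  have hmain : a * ‖z‖ ^ (n + 1) ≤ (|b| + n) * ‖z‖ ^ n := by
    calc a * ‖z‖ ^ (n + 1) = ‖(a : ℂ) * z ^ (n + 1)‖ := by
          rw [norm_mul, norm_pow, Complex.norm_real, Real.norm_of_nonneg ha]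
      _ = ‖∑ j ∈ Finset.range n, z ^ j - b * z ^ n‖ := by rw [← hz, add_sub_cancel_right]
      _ ≤ n * ‖z‖ ^ n + |b| * ‖z‖ ^ n := by
          refine (norm_sub_le _ _).trans (add_le_add hsum ?_)
          rw [norm_mul, norm_pow, Complex.norm_real, Real.norm_eq_abs]
      _ = (|b| + n) * ‖z‖ ^ n := by ring
  linarith [mul_lt_mul_of_pos_right hab hrn,
    mul_le_mul_of_nonneg_left (pow_le_pow_right₀ hz1 (by omega : n ≤ n + 1)) ha]

section Chain

variable {R : Type*} [CommRing R] {f : ℕ → R[X]}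

theorem chain_add_two (hrec : ∀ n, 2 ≤ n → f n = X * f (n - 1) - 1) (n : ℕ) :
    f (n + 2) = X * f (n + 1) - 1 :=
  hrec (n + 2) (by omega)

theorem chain_eq_X_pow_mul_sub_geom_sum (hrec : ∀ n, 2 ≤ n → f n = X * f (n - 1) - 1) (n : ℕ) :
    f (n + 1) = X ^ n * f 1 - ∑ j ∈ Finset.range n, X ^ j := by
  induction n with
  | zero => simp
  | succ n ih =>
    rw [chain_add_two hrec, ih, Finset.sum_range_succ']
    simp only [pow_succ', ← Finset.mul_sum, pow_zero]
    ring

theorem chain_coeff_zero (hrec : ∀ n, 2 ≤ n → f n = X * f (n - 1) - 1) (n : ℕ) :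
    (f (n + 2)).coeff 0 = -1 := by
  simp [chain_add_two hrec]

variable [Nontrivial R]

theorem leadingCoeff_X_mul_sub_one {g : R[X]} (hg : g ≠ 0) :
    (X * g - 1).leadingCoeff = g.leadingCoeff := by
  rw [leadingCoeff_sub_of_degree_lt, mul_comm, leadingCoeff_mul_X]
  rw [degree_one, ← natDegree_pos_iff_degree_pos, natDegree_X_mul hg]
  exact Nat.succ_pos _

theorem natDegree_X_mul_sub_one {g : R[X]} (hg : g ≠ 0) :
    (X * g - 1).natDegree = g.natDegree + 1 := by
  rw [natDegree_sub_eq_left_of_natDegree_lt] <;> simp [natDegree_X_mul hg]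

theorem chain_leadingCoeff (hrec : ∀ n, 2 ≤ n → f n = X * f (n - 1) - 1) (h1 : f 1 ≠ 0)
    (n : ℕ) : (f (n + 1)).leadingCoeff = (f 1).leadingCoeff := by
  induction n with
  | zero => rfl
  | succ n ih =>
    have hne : f (n + 1) ≠ 0 := fun h => h1 <| leadingCoeff_eq_zero.1 <| by
      rw [← ih, h, leadingCoeff_zero]
    rw [chain_add_two hrec, leadingCoeff_X_mul_sub_one hne, ih]

theorem chain_natDegree (hrec : ∀ n, 2 ≤ n → f n = X * f (n - 1) - 1) (h1 : f 1 ≠ 0)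
    (n : ℕ) : (f (n + 1)).natDegree = (f 1).natDegree + n := by
  induction n with
  | zero => rfl
  | succ n ih =>
    have hne : f (n + 1) ≠ 0 := fun h => h1 <| leadingCoeff_eq_zero.1 <| by
      rw [← chain_leadingCoeff hrec h1 n, h, leadingCoeff_zero]
    rw [chain_add_two hrec, natDegree_X_mul_sub_one hne, ih, add_assoc]

end Chain

section SecondKindChain

variable {k p : ℕ} {f : ℕ → ℤ[X]}

theorem norm_lt_one_of_aeval_chain_eq_zero (hkp : k ≤ p)
    (h1 : f 1 = C (p : ℤ) * X + C ((k : ℤ) - p)) (hrec : ∀ n, 2 ≤ n → f n = X * f (n - 1) - 1)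
    {n : ℕ} (hn : n < k) {z : ℂ} (hz : aeval z (f (n + 1)) = 0) : ‖z‖ < 1 := by
  refine norm_lt_one_of_mul_pow_add_mul_pow_eq_geom_sum (a := p) (b := k - p) (n := n) ?_ ?_
  · rw [abs_of_nonpos (sub_nonpos.2 (by exact_mod_cast hkp))]
    have : (n : ℝ) < k := by exact_mod_cast hn
    linarith
  · rw [chain_eq_X_pow_mul_sub_geom_sum hrec, h1] at hz
    simp only [map_natCast, eq_intCast, Int.cast_sub, Int.cast_natCast, aeval_sub, map_mul,
      map_pow, aeval_X, map_add, map_sum] at hz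
    push_cast
    linear_combination hz

theorem irreducible_map_chain (hp : p.Prime) (hkp : k ≤ p)
    (h1 : f 1 = C (p : ℤ) * X + C ((k : ℤ) - p)) (hrec : ∀ n, 2 ≤ n → f n = X * f (n - 1) - 1)
    {n : ℕ} (hn : 1 ≤ n) (hnk : n ≤ k) : Irreducible ((f n).map (Int.castRingHom ℚ)) := by
  have hp0 : (p : ℤ) ≠ 0 := by exact_mod_cast hp.ne_zero
  obtain ⟨m, rfl⟩ := Nat.exists_eq_add_of_le' hn
  rcases m with _ | m
  · rw [h1]
    exact irreducible_of_degree_eq_one <| by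
      rw [degree_map_eq_of_injective (RingHom.injective_int _), degree_linear hp0]
  have hf1 : f 1 ≠ 0 := leadingCoeff_ne_zero.1 (by rwa [h1, leadingCoeff_linear hp0])
  have hcoeff : IsUnit ((f (m + 2)).coeff 0) := by
    rw [chain_coeff_zero hrec]
    exact isUnit_one.neg
  have hprim : (f (m + 2)).IsPrimitive := fun r hr =>
    isUnit_of_dvd_unit ((C_dvd_iff_dvd_coeff _ _).1 hr 0) hcoeff
  refine (IsPrimitive.Int.irreducible_iff_irreducible_map_cast hprim).1 <|
    irreducible_of_prime_leadingCoeff_of_norm_root_lt_one ?_ hcoeff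
      fun z hz => norm_lt_one_of_aeval_chain_eq_zero hkp h1 hrec (by omega) hz
  rw [chain_leadingCoeff hrec hf1, h1, leadingCoeff_linear hp0]
  exact Nat.prime_iff_prime_int.1 hp

theorem not_irreducible_map_chain (hk : 1 ≤ k) (hp : p ≠ 0)
    (h1 : f 1 = C (p : ℤ) * X + C ((k : ℤ) - p)) (hrec : ∀ n, 2 ≤ n → f n = X * f (n - 1) - 1) :
    ¬ Irreducible ((f (k + 1)).map (Int.castRingHom ℚ)) := by
  have hp0 : (p : ℤ) ≠ 0 := by exact_mod_cast hp
  have hf1 : f 1 ≠ 0 := leadingCoeff_ne_zero.1 (by rwa [h1, leadingCoeff_linear hp0])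
  refine fun hirr => hirr.not_isRoot_of_natDegree_ne_one (x := 1) ?_ ?_
  · rw [natDegree_map_eq_of_injective (RingHom.injective_int _), chain_natDegree hrec hf1, h1,
      natDegree_linear hp0]
    omega
  · rw [IsRoot, eval_map, chain_eq_X_pow_mul_sub_geom_sum hrec, h1]
    simp

end SecondKindChain

theorem stmt18 (k : ℕ) (hk : 1 ≤ k) :
    {f₁ : Polynomial ℤ | 0 < f₁.leadingCoeff ∧
      ∀ f : ℕ → Polynomial ℤ, f 1 = f₁ → (∀ n, 2 ≤ n → f n = X * f (n - 1) - 1) →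
        (∀ n, 1 ≤ n → n ≤ k → Irreducible ((f n).map (Int.castRingHom ℚ))) ∧
        ¬ Irreducible ((f (k + 1)).map (Int.castRingHom ℚ))}.Infinite := by
  let seed : ℕ → ℤ[X] := fun p => C (p : ℤ) * X + C ((k : ℤ) - p)
  have hseed : Function.Injective seed := fun p q h => by
    simpa [seed] using congrArg (coeff · 1) h
  have hprimes : {p : ℕ | p.Prime ∧ k ≤ p}.Infinite :=
    Set.infinite_of_forall_exists_gt fun n =>
      let ⟨p, hnp, hp⟩ := Nat.exists_infinite_primes (max n k + 1)
      ⟨p, ⟨hp, by omega⟩, by omega⟩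
  refine (hprimes.image hseed.injOn).mono ?_
  rintro _ ⟨p, ⟨hp, hkp⟩, rfl⟩
  have hp0 : (p : ℤ) ≠ 0 := by exact_mod_cast hp.ne_zero
  refine ⟨?_, fun f h1 hrec => ⟨fun n hn hnk => irreducible_map_chain hp hkp h1 hrec hn hnk,
    not_irreducible_map_chain hk hp.ne_zero h1 hrec⟩⟩
  rw [leadingCoeff_linear hp0]
  exact_mod_cast hp.pos
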